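/- Let 𝒮 ⊆ 𝓑(M) be a distinguished set of abstract boundary points, let A ⊆ M be a singularly compact set, and let σ : [0, b) → M (0 < b ≤ ∞) be a continuous curve whose image is contained in A. If σ is not totally imprisoned in any compact set (there is no compact K ⊆ M such that σ eventually enters and remains inside K), then the image of σ meets every singular neighborhood, and consequently σ has an accumulation point in (M̄, 𝒯_sap) belonging to 𝒮. -/

import Mathlib

open scoped Manifold
open Set Filter Topology

universe u

/-- An *envelopment* of a manifold `M` (modelled on `I`): a smooth embedding of `M` into a
smooth manifold of the same dimension (same model), whose target is Hausdorff, connected and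
paracompact; being an embedding of equidimensional manifolds, its image is open. -/
structure Envelopment {E H : Type u} [NormedAddCommGroup E] [NormedSpace ℝ E]
    [TopologicalSpace H] (I : ModelWithCorners ℝ E H)
    (M : Type u) [TopologicalSpace M] [ChartedSpace H M] : Type (u + 1) where
  carrier : Type u
  [ts : TopologicalSpace carrier]
  [t2 : T2Space carrier]
  [conn : ConnectedSpace carrier]
  [pc : ParacompactSpace carrier]
  [cs : ChartedSpace H carrier]
  [sm : IsManifold I (⊤ : ℕ∞) carrier]
  map : M → carrier
  smooth : ContMDiff I I (⊤ : ℕ∞) map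
  immersion : ∀ x : M, Function.Injective (mfderiv I I map x)
  emb : IsOpenEmbedding map

attribute [instance] Envelopment.ts Envelopment.t2 Envelopment.conn Envelopment.pc
  Envelopment.cs Envelopment.sm

variable {E H : Type u} [NormedAddCommGroup E] [NormedSpace ℝ E] [TopologicalSpace H]
variable {I : ModelWithCorners ℝ E H}
variable {M : Type u} [TopologicalSpace M] [ChartedSpace H M]

/-- A *boundary set*: a nonempty subset of the topological boundary `∂φ(M)` of the image of an
envelopment `φ`. -/
structure BoundarySet {E H : Type u} [NormedAddCommGroup E] [NormedSpace ℝ E]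
    [TopologicalSpace H] (I : ModelWithCorners ℝ E H)
    (M : Type u) [TopologicalSpace M] [ChartedSpace H M] : Type (u + 1) where
  env : Envelopment I M
  set : Set env.carrier
  nonempty : set.Nonempty
  subset_frontier : set ⊆ frontier (Set.range env.map)

/-- `B` covers `B'` (written `B ▷ B'`): for every open neighbourhood `N` of `B` there is an
open neighbourhood `N'` of `B'` with `φ(φ'⁻¹(N' ∩ φ'(M))) ⊆ N`. -/
def Covers (B B' : BoundarySet I M) : Prop :=
  ∀ N : Set B.env.carrier, IsOpen N → B.set ⊆ N →
    ∃ N' : Set B'.env.carrier, IsOpen N' ∧ B'.set ⊆ N' ∧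
      B.env.map '' (B'.env.map ⁻¹' N') ⊆ N

theorem covers_refl (B : BoundarySet I M) : Covers B B :=
  fun N hN hBN => ⟨N, hN, hBN, Set.image_preimage_subset _ _⟩

theorem covers_trans {B B' B'' : BoundarySet I M} (h : Covers B B') (h' : Covers B' B'') :
    Covers B B'' := by
  intro N hN hBN
  obtain ⟨N', hN', hB'N', hsub⟩ := h N hN hBN
  obtain ⟨N'', hN'', hB''N'', hsub'⟩ := h' N' hN' hB'N'
  refine ⟨N'', hN'', hB''N'', ?_⟩
  rintro x ⟨m, hm, rfl⟩
  exact hsub ⟨m, hsub' ⟨m, hm, rfl⟩, rfl⟩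

/-- Boundary sets are equivalent when each covers the other. -/
def bsSetoid {E H : Type u} [NormedAddCommGroup E] [NormedSpace ℝ E]
    [TopologicalSpace H] (I : ModelWithCorners ℝ E H)
    (M : Type u) [TopologicalSpace M] [ChartedSpace H M] : Setoid (BoundarySet I M) where
  r B B' := Covers B B' ∧ Covers B' B
  iseqv := ⟨fun B => ⟨covers_refl B, covers_refl B⟩, fun h => ⟨h.2, h.1⟩,
    fun h h' => ⟨covers_trans h.1 h'.1, covers_trans h'.2 h.2⟩⟩

/-- An equivalence class of boundary sets is an *abstract boundary point* when it has a
singleton representative under some envelopment. -/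
def IsAbstractPoint (q : Quotient (bsSetoid I M)) : Prop :=
  ∃ B : BoundarySet I M, Quotient.mk (bsSetoid I M) B = q ∧ ∃ p, B.set = {p}

/-- The abstract boundary `𝓑(M)`: all abstract boundary points. -/
def AbstractBoundary {E H : Type u} [NormedAddCommGroup E] [NormedSpace ℝ E]
    [TopologicalSpace H] (I : ModelWithCorners ℝ E H)
    (M : Type u) [TopologicalSpace M] [ChartedSpace H M] :=
  {q : Quotient (bsSetoid I M) // IsAbstractPoint q}

/-- The singleton boundary set `{p}` at a boundary point `p` of an envelopment. -/
def singletonBS (e : Envelopment I M) {p : e.carrier}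
    (hp : p ∈ frontier (Set.range e.map)) : BoundarySet I M :=
  ⟨e, {p}, Set.singleton_nonempty p, Set.singleton_subset_iff.mpr hp⟩

/-- The abstract boundary point `[p]` determined by a boundary point `p` of an envelopment. -/
def absOf (e : Envelopment I M) {p : e.carrier}
    (hp : p ∈ frontier (Set.range e.map)) : AbstractBoundary I M :=
  ⟨Quotient.mk (bsSetoid I M) (singletonBS e hp), singletonBS e hp, rfl, p, rfl⟩

/-- A boundary set `B ⊆ ∂φ(M)` is *strongly attached* to an open `U ⊆ M` when some open
`N ⊇ B` satisfies `N ∩ φ(M) ⊆ φ(U)`. -/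
def StronglyAttached (B : BoundarySet I M) (U : Set M) : Prop :=
  ∃ N : Set B.env.carrier, IsOpen N ∧ B.set ⊆ N ∧
    N ∩ Set.range B.env.map ⊆ B.env.map '' U

/-- An abstract boundary point is strongly attached to `U` when its representatives are. -/
def AbsStronglyAttached (x : AbstractBoundary I M) (U : Set M) : Prop :=
  ∀ B : BoundarySet I M, Quotient.mk (bsSetoid I M) B = x.1 → StronglyAttached B U

/-- `𝓑_U`: the set of abstract boundary points strongly attached to `U`. -/
def absAttachedSet (I : ModelWithCorners ℝ E H) (M : Type u) [TopologicalSpace M]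
    [ChartedSpace H M] (U : Set M) : Set (AbstractBoundary I M) :=
  {x | AbsStronglyAttached x U}

/-- `M̄ = M ∪ 𝓑(M)`. -/
def Mbar {E H : Type u} [NormedAddCommGroup E] [NormedSpace ℝ E]
    [TopologicalSpace H] (I : ModelWithCorners ℝ E H)
    (M : Type u) [TopologicalSpace M] [ChartedSpace H M] :=
  M ⊕ AbstractBoundary I M

/-- The strongly attached point topology `𝒯_sap` on `M̄`, generated by the basis
`{U ∪ 𝓑_U : U ⊆ M open}`. -/
instance : TopologicalSpace (Mbar I M) :=
  TopologicalSpace.generateFrom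
    {s | ∃ U : Set M, IsOpen U ∧
      s = Sum.inl '' U ∪ Sum.inr '' absAttachedSet I M U}

/-- An open `U ⊆ M` is a *singular neighbourhood* (w.r.t. a distinguished set `𝒮` of abstract
boundary points) when every point of `𝒮` is strongly attached to `U`. -/
def SingularNbhd (𝒮 : Set (AbstractBoundary I M)) (U : Set M) : Prop :=
  IsOpen U ∧ ∀ x ∈ 𝒮, AbsStronglyAttached x U

/-- A closed `A ⊆ M` is *singularly compact* when `A \ U` is compact for every singular
neighbourhood `U`. -/
def SingularlyCompact (𝒮 : Set (AbstractBoundary I M)) (A : Set M) : Prop :=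
  IsClosed A ∧ ∀ U : Set M, SingularNbhd 𝒮 U → IsCompact (A \ U)

/-- Inclusion of `M` into `M̄`. -/
def Mbar.ofM {E H : Type u} [NormedAddCommGroup E] [NormedSpace ℝ E]
    [TopologicalSpace H] {I : ModelWithCorners ℝ E H}
    {M : Type u} [TopologicalSpace M] [ChartedSpace H M] (p : M) : Mbar I M :=
  Sum.inl p

/-- Inclusion of the abstract boundary `𝓑(M)` into `M̄`. -/
def Mbar.ofB {E H : Type u} [NormedAddCommGroup E] [NormedSpace ℝ E]
    [TopologicalSpace H] {I : ModelWithCorners ℝ E H}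
    {M : Type u} [TopologicalSpace M] [ChartedSpace H M] (x : AbstractBoundary I M) :
    Mbar I M :=
  Sum.inr x

/-! An open set of `M̄` around a point `x ∈ 𝒮` contains the trace of a neighbourhood `V ⊆ M`
to which `x` is strongly attached. If `σ` avoided some such `V` for every `x ∈ 𝒮`, the union
of these `V` would be a singular neighbourhood missed by `σ`; but `σ` meets every singular
neighbourhood `U`, since otherwise it would be totally imprisoned in the compact set `A \ U`. -/

theorem StronglyAttached.mono {B : BoundarySet I M} {U U' : Set M} (h : StronglyAttached B U)
    (hUU' : U ⊆ U') : StronglyAttached B U' := by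
  obtain ⟨N, hNo, hBN, hNU⟩ := h
  exact ⟨N, hNo, hBN, hNU.trans (image_mono hUU')⟩

theorem StronglyAttached.inter {B : BoundarySet I M} {U V : Set M} (hU : StronglyAttached B U)
    (hV : StronglyAttached B V) : StronglyAttached B (U ∩ V) := by
  obtain ⟨N, hNo, hBN, hNU⟩ := hU
  obtain ⟨N', hN'o, hBN', hN'V⟩ := hV
  refine ⟨N ∩ N', hNo.inter hN'o, subset_inter hBN hBN', ?_⟩
  rintro y ⟨⟨hyN, hyN'⟩, hyφ⟩
  rw [image_inter B.env.emb.injective]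
  exact ⟨hNU ⟨hyN, hyφ⟩, hN'V ⟨hyN', hyφ⟩⟩

theorem absStronglyAttached_univ (x : AbstractBoundary I M) : AbsStronglyAttached x univ :=
  fun _ _ => ⟨univ, isOpen_univ, subset_univ _, by simp⟩

theorem AbsStronglyAttached.mono {x : AbstractBoundary I M} {U U' : Set M}
    (h : AbsStronglyAttached x U) (hUU' : U ⊆ U') : AbsStronglyAttached x U' :=
  fun B hB => (h B hB).mono hUU'

theorem AbsStronglyAttached.inter {x : AbstractBoundary I M} {U V : Set M}
    (hU : AbsStronglyAttached x U) (hV : AbsStronglyAttached x V) :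
    AbsStronglyAttached x (U ∩ V) :=
  fun B hB => (hU B hB).inter (hV B hB)

theorem Mbar.exists_absStronglyAttached_of_isOpen {O : Set (Mbar I M)} (hO : IsOpen O)
    {x : AbstractBoundary I M} (hx : Mbar.ofB x ∈ O) :
    ∃ V : Set M, IsOpen V ∧ AbsStronglyAttached x V ∧ Mbar.ofM '' V ⊆ O := by
  induction hO with
  | basic s hs =>
    obtain ⟨U, hUo, rfl⟩ := hs
    refine ⟨U, hUo, ?_, subset_union_left⟩
    rcases hx with ⟨_, _, hp⟩ | ⟨y, hy, hyx⟩
    · exact absurd hp Sum.inl_ne_inr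
    · exact Sum.inr_injective hyx ▸ hy
  | univ => exact ⟨univ, isOpen_univ, absStronglyAttached_univ x, subset_univ _⟩
  | inter O₁ O₂ _ _ ih₁ ih₂ =>
    obtain ⟨V₁, hV₁o, hV₁x, hV₁O⟩ := ih₁ hx.1
    obtain ⟨V₂, hV₂o, hV₂x, hV₂O⟩ := ih₂ hx.2
    refine ⟨V₁ ∩ V₂, hV₁o.inter hV₂o, hV₁x.inter hV₂x, ?_⟩
    exact (image_inter_subset _ _ _).trans (inter_subset_inter hV₁O hV₂O)
  | sUnion 𝒪 _ ih =>
    obtain ⟨O, hO𝒪, hxO⟩ := hx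
    obtain ⟨V, hVo, hVx, hVO⟩ := ih O hO𝒪 hxO
    exact ⟨V, hVo, hVx, hVO.trans (subset_sUnion_of_mem hO𝒪)⟩

theorem Mbar.exists_absStronglyAttached_disjoint_of_not_accPt {x : AbstractBoundary I M}
    {S : Set M} (hx : ¬ AccPt (Mbar.ofB x) (𝓟 (Mbar.ofM '' S))) :
    ∃ V : Set M, IsOpen V ∧ AbsStronglyAttached x V ∧ Disjoint V S := by
  obtain ⟨N, hN, hNS⟩ :
      ∃ N ∈ 𝓝 (Mbar.ofB x), ∀ p, Mbar.ofM p ∈ N → p ∈ S → Mbar.ofM p = Mbar.ofB x := by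
    simpa [accPt_iff_nhds] using hx
  obtain ⟨O, hON, hOo, hxO⟩ := mem_nhds_iff.mp hN
  obtain ⟨V, hVo, hVx, hVO⟩ := Mbar.exists_absStronglyAttached_of_isOpen hOo hxO
  refine ⟨V, hVo, hVx, disjoint_left.mpr fun p hpV hpS => ?_⟩
  exact Sum.inl_ne_inr (hNS p (hON (hVO ⟨p, hpV, rfl⟩)) hpS)

theorem exists_accPt_of_forall_singularNbhd_inter_nonempty
    {𝒮 : Set (AbstractBoundary I M)} {S : Set M} (hS : ∀ U, SingularNbhd 𝒮 U → (S ∩ U).Nonempty) :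
    ∃ x ∈ 𝒮, AccPt (Mbar.ofB x) (𝓟 (Mbar.ofM '' S)) := by
  by_contra! hacc
  choose! V hVo hVx hVS using
    fun x hx => Mbar.exists_absStronglyAttached_disjoint_of_not_accPt (hacc x hx)
  have hU : SingularNbhd 𝒮 (⋃ x ∈ 𝒮, V x) :=
    ⟨isOpen_biUnion hVo, fun x hx => (hVx x hx).mono (subset_biUnion_of_mem hx)⟩
  obtain ⟨p, hpS, hpU⟩ := hS _ hU
  obtain ⟨x, hx, hpV⟩ := mem_iUnion₂.mp hpU
  exact disjoint_left.mp (hVS x hx) hpV hpS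

theorem SingularlyCompact.inter_nonempty_of_forall_not_subset_isCompact
    {𝒮 : Set (AbstractBoundary I M)} {A S : Set M} (hA : SingularlyCompact 𝒮 A)
    (hSA : S ⊆ A) (hS : ∀ K, IsCompact K → ¬ S ⊆ K) {U : Set M} (hU : SingularNbhd 𝒮 U) :
    (S ∩ U).Nonempty := by
  by_contra! hSU
  exact hS _ (hA.2 U hU) fun p hp => ⟨hSA hp, fun hpU => hSU.subset ⟨hp, hpU⟩⟩

theorem curve_not_totally_imprisoned_acc_singularity_general
    {E H : Type u} [NormedAddCommGroup E] [NormedSpace ℝ E] [TopologicalSpace H]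
    {I : ModelWithCorners ℝ E H} {M : Type u} [TopologicalSpace M] [ChartedSpace H M]
    (𝒮 : Set (AbstractBoundary I M)) (A : Set M) (hA : SingularlyCompact 𝒮 A)
    (b : EReal) (hb : 0 < b) (σ : ℝ → M)
    (himg : ∀ t : ℝ, 0 ≤ t → (t : EReal) < b → σ t ∈ A)
    (himp : ¬ ∃ K : Set M, IsCompact K ∧ ∃ t₀ : ℝ, 0 ≤ t₀ ∧ (t₀ : EReal) < b ∧
        ∀ t : ℝ, t₀ ≤ t → (t : EReal) < b → σ t ∈ K) :
    (∀ U : Set M, SingularNbhd 𝒮 U →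
        ∃ t : ℝ, 0 ≤ t ∧ (t : EReal) < b ∧ σ t ∈ U) ∧
      ∃ x ∈ 𝒮, AccPt (Mbar.ofB x)
        (Filter.principal (Mbar.ofM '' (σ '' {t : ℝ | 0 ≤ t ∧ (t : EReal) < b}))) := by
  set T := {t : ℝ | 0 ≤ t ∧ (t : EReal) < b}
  have hTA : σ '' T ⊆ A := image_subset_iff.mpr fun t ht => himg t ht.1 ht.2
  have hfree : ∀ K, IsCompact K → ¬ σ '' T ⊆ K := fun K hK hTK =>
    himp ⟨K, hK, 0, le_rfl, mod_cast hb, fun t ht htb => hTK ⟨t, ⟨ht, htb⟩, rfl⟩⟩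
  have hmeet : ∀ U, SingularNbhd 𝒮 U → (σ '' T ∩ U).Nonempty := fun U hU =>
    hA.inter_nonempty_of_forall_not_subset_isCompact hTA hfree hU
  refine ⟨fun U hU => ?_, exists_accPt_of_forall_singularNbhd_inter_nonempty hmeet⟩
  obtain ⟨_, ⟨t, ⟨ht, htb⟩, rfl⟩, htU⟩ := hmeet U hU
  exact ⟨t, ht, htb, htU⟩

/-- If a continuous curve `σ : [0, b) → M` whose image lies in a singularly compact set `A` is
not totally imprisoned in any compact set, then `σ` meets every singular neighbourhood, and
consequently `σ` has an accumulation point in `(M̄, 𝒯_sap)` belonging to `𝒮`. -/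
theorem curve_not_totally_imprisoned_acc_singularity
    {E H : Type u} [NormedAddCommGroup E] [NormedSpace ℝ E] [TopologicalSpace H]
    {I : ModelWithCorners ℝ E H} {M : Type u} [TopologicalSpace M] [ChartedSpace H M]
    [IsManifold I (⊤ : ℕ∞) M] [T2Space M] [ConnectedSpace M] [ParacompactSpace M]
    (𝒮 : Set (AbstractBoundary I M)) (A : Set M) (hA : SingularlyCompact 𝒮 A)
    (b : EReal) (hb : 0 < b) (σ : ℝ → M)
    (hσ : ContinuousOn σ {t : ℝ | 0 ≤ t ∧ (t : EReal) < b})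
    (himg : ∀ t : ℝ, 0 ≤ t → (t : EReal) < b → σ t ∈ A)
    (himp : ¬ ∃ K : Set M, IsCompact K ∧ ∃ t₀ : ℝ, 0 ≤ t₀ ∧ (t₀ : EReal) < b ∧
        ∀ t : ℝ, t₀ ≤ t → (t : EReal) < b → σ t ∈ K) :
    (∀ U : Set M, SingularNbhd 𝒮 U →
        ∃ t : ℝ, 0 ≤ t ∧ (t : EReal) < b ∧ σ t ∈ U) ∧
      ∃ x ∈ 𝒮, AccPt (Mbar.ofB x)
        (Filter.principal (Mbar.ofM '' (σ '' {t : ℝ | 0 ≤ t ∧ (t : EReal) < b}))) :=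
  curve_not_totally_imprisoned_acc_singularity_general 𝒮 A hA b hb σ himg himp
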